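/- arXiv:2206.09054 — 3 statements merged into one kernel-verified Lean document; each statement's English description precedes it below -/
import Mathlib

section
/- (Adjoint equation.) Let λ(τ,t) = (h(τ) ∘ φ(τ−t))' ∘ φ(t). Then λ(τ,·) satisfies ∂_t λ(τ,t) = − λ(τ,t) · (F' ∘ φ(t)) for 0 < t < τ ≤ 1, where the product is composition of the linear map λ(τ,t)(ξ) : S → ℝ with the linear map F'(φ(t)(ξ)) : S → S, evaluated at each point ξ ∈ S. -/
/-!
With `Ψ (s, x) = φ s x`, the group law gives `h τ ∘ φ (τ - u) = (h τ ∘ φ (τ - t)) ∘ φ (t - u)`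
and `φ (t - u) (φ u ξ) = φ t ξ`, so by the chain rule `λ(τ, u) = λ(τ, t) ∘ ∂ₓΨ (t - u, φ u ξ)`.
The curve `u ↦ (t - u, φ u ξ)` passes through `(0, φ t ξ)` with velocity `(-1, F (φ t ξ))`.
Since `Ψ (0, ·) = id` and `∂ₛΨ (0, ·) = F`, symmetry of the second derivative of the `C²` map `Ψ`
gives `∂ₛ∂ₓΨ (0, x) = ∂ₓ∂ₛΨ (0, x) = F' x` and `∂ₓ∂ₓΨ (0, x) = 0`; hence
`∂ᵤ ∂ₓΨ (t - u, φ u ξ) = -F' (φ t ξ)` at `u = t`.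
-/

open ContinuousLinearMap Function

/-- The lifted right hand side `F(s,p,θ) = (1, f(s,p,θ), 0)`. -/
def liftedF {d k : ℕ} (f : (ℝ × (Fin d → ℝ) × (Fin k → ℝ)) → (Fin d → ℝ))
    (ξ : ℝ × (Fin d → ℝ) × (Fin k → ℝ)) : ℝ × (Fin d → ℝ) × (Fin k → ℝ) :=
  ((1 : ℝ), f ξ, (0 : Fin k → ℝ))

section Flow

variable {E G : Type*} [NormedAddCommGroup E] [NormedSpace ℝ E]
  [NormedAddCommGroup G] [NormedSpace ℝ G] {φ : ℝ → E → E} {F : E → E}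

theorem hasFDerivAt_of_hasFDerivAt_uncurry {s : ℝ} {x : E} {D : ℝ × E →L[ℝ] E}
    (hD : HasFDerivAt (uncurry φ) D (s, x)) : HasFDerivAt (φ s) (D.comp (inr ℝ ℝ E)) x :=
  hD.comp x (hasFDerivAt_prodMk_right s x)

theorem fderiv_uncurry_flow_zero_apply {x : E} (hφ : DifferentiableAt ℝ (uncurry φ) (0, x))
    (hφ0 : φ 0 = id) (hF : HasDerivAt (fun s => φ s x) (F x) 0) (σ : ℝ) (v : E) :
    fderiv ℝ (uncurry φ) (0, x) (σ, v) = σ • F x + v := by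
  have htime : fderiv ℝ (uncurry φ) (0, x) (1, 0) = F x := by
    have hcurve := hφ.hasFDerivAt.comp_hasDerivAt (0 : ℝ)
      ((hasDerivAt_id (0 : ℝ)).prodMk (hasDerivAt_const (0 : ℝ) x))
    exact hcurve.unique hF
  have hspace : (fderiv ℝ (uncurry φ) (0, x)).comp (inr ℝ ℝ E) = ContinuousLinearMap.id ℝ E :=
    (hasFDerivAt_of_hasFDerivAt_uncurry hφ.hasFDerivAt).unique (hφ0 ▸ hasFDerivAt_id x)
  have hsplit : ((σ, v) : ℝ × E) = σ • ((1 : ℝ), (0 : E)) + inr ℝ ℝ E v := by simp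
  rw [hsplit, map_add, map_smul, htime, ← ContinuousLinearMap.comp_apply, hspace, id_apply]

theorem differentiable_of_contDiff_uncurry_flow (hφ : ContDiff ℝ 2 (uncurry φ))
    (hφ0 : φ 0 = id) (hF : ∀ x, HasDerivAt (fun s => φ s x) (F x) 0) : Differentiable ℝ F := by
  have hFeq : F = fun x => fderiv ℝ (uncurry φ) (0, x) (1, 0) := funext fun x => by
    rw [fderiv_uncurry_flow_zero_apply (hφ.differentiable two_ne_zero _) hφ0 (hF x)]
    simp
  rw [hFeq]
  have hφ' : Differentiable ℝ (fderiv ℝ (uncurry φ)) :=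
    (hφ.fderiv_right (m := 1) le_rfl).differentiable one_ne_zero
  fun_prop

theorem fderiv_fderiv_uncurry_flow_zero_inr_apply (hφ : ContDiff ℝ 2 (uncurry φ))
    (hφ0 : φ 0 = id) (hF : ∀ x, HasDerivAt (fun s => φ s x) (F x) 0) (x₀ w : E) (σ : ℝ) (v : E) :
    fderiv ℝ (fderiv ℝ (uncurry φ)) (0, x₀) (0, w) (σ, v) = σ • fderiv ℝ F x₀ w := by
  have hD2 : HasFDerivAt (fderiv ℝ (uncurry φ)) (fderiv ℝ (fderiv ℝ (uncurry φ)) (0, x₀)) (0, x₀) :=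
    ((hφ.fderiv_right (m := 1) le_rfl).differentiable one_ne_zero _).hasFDerivAt
  have hslice := (hD2.comp x₀ (hasFDerivAt_prodMk_right 0 x₀)).clm_apply
    (hasFDerivAt_const ((σ, v) : ℝ × E) x₀)
  have hfun : (fun x => fderiv ℝ (uncurry φ) (0, x) (σ, v)) = fun x => σ • F x + v :=
    funext fun x =>
      fderiv_uncurry_flow_zero_apply (hφ.differentiable two_ne_zero _) hφ0 (hF x) σ v
  have hF' : HasFDerivAt (fun x => σ • F x + v) (σ • fderiv ℝ F x₀) x₀ :=
    ((differentiable_of_contDiff_uncurry_flow hφ hφ0 hF x₀).hasFDerivAt.const_smul σ).add_const v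
  simp only [Function.comp_def, hfun] at hslice
  simpa using congrArg (· w) (hslice.unique hF')

theorem hasFDerivAt_fderiv_flow_zero (hφ : ContDiff ℝ 2 (uncurry φ)) (hφ0 : φ 0 = id)
    (hF : ∀ x, HasDerivAt (fun s => φ s x) (F x) 0) (x₀ : E) :
    HasFDerivAt (fun p : ℝ × E => fderiv ℝ (φ p.1) p.2)
      ((fst ℝ ℝ E).smulRight (fderiv ℝ F x₀)) (0, x₀) := by
  have hΨ : ∀ p, HasFDerivAt (uncurry φ) (fderiv ℝ (uncurry φ) p) p := fun p =>
    (hφ.differentiable two_ne_zero p).hasFDerivAt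
  have hD2 : HasFDerivAt (fderiv ℝ (uncurry φ)) (fderiv ℝ (fderiv ℝ (uncurry φ)) (0, x₀)) (0, x₀) :=
    ((hφ.fderiv_right (m := 1) le_rfl).differentiable one_ne_zero _).hasFDerivAt
  have hpartial : (fun p : ℝ × E => fderiv ℝ (φ p.1) p.2)
      = fun p => (fderiv ℝ (uncurry φ) p).comp (inr ℝ ℝ E) :=
    funext fun p => (hasFDerivAt_of_hasFDerivAt_uncurry (hΨ p)).fderiv
  rw [hpartial]
  refine ((((compL ℝ E (ℝ × E) E).flip (inr ℝ ℝ E)).hasFDerivAt).comp (0, x₀) hD2).congr_fderiv ?_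
  refine ContinuousLinearMap.ext fun ⟨σ, v⟩ => ContinuousLinearMap.ext fun w => ?_
  simp only [ContinuousLinearMap.comp_apply, flip_apply, compL_apply, smulRight_apply,
    coe_fst', smul_apply]
  rw [← fderiv_fderiv_uncurry_flow_zero_inr_apply hφ hφ0 hF]
  exact second_derivative_symmetric hΨ hD2 _ _

theorem hasDerivAt_fderiv_flow_sub (hφ : ContDiff ℝ 2 (uncurry φ)) (hφ0 : φ 0 = id)
    (hflow : ∀ s x, HasDerivAt (fun u => φ u x) (F (φ s x)) s) (t : ℝ) (ξ : E) :
    HasDerivAt (fun u => fderiv ℝ (φ (t - u)) (φ u ξ)) (-fderiv ℝ F (φ t ξ)) t := by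
  have hF : ∀ x, HasDerivAt (fun s => φ s x) (F x) 0 := fun x => by
    simpa [hφ0] using hflow 0 x
  have hcurve : HasDerivAt (fun u => (t - u, φ u ξ)) ((-1 : ℝ), F (φ t ξ)) t :=
    ((hasDerivAt_id t).const_sub t).prodMk (hflow t ξ)
  have hB := hasFDerivAt_fderiv_flow_zero hφ hφ0 hF (φ t ξ)
  rw [← sub_self t] at hB
  simpa [Function.comp_def] using hB.comp_hasDerivAt t hcurve

theorem fderiv_comp_flow_sub (hgroup : ∀ a b, φ (a + b) = φ a ∘ φ b) {g : E → G} {r t u : ℝ}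
    {ξ : E} (hg : DifferentiableAt ℝ (fun ζ => g (φ (r - t) ζ)) (φ t ξ))
    (hφ : DifferentiableAt ℝ (φ (t - u)) (φ u ξ)) :
    fderiv ℝ (fun ζ => g (φ (r - u) ζ)) (φ u ξ)
      = (fderiv ℝ (fun ζ => g (φ (r - t) ζ)) (φ t ξ)).comp (fderiv ℝ (φ (t - u)) (φ u ξ)) := by
  have hpt : φ (t - u) (φ u ξ) = φ t ξ := by
    rw [← comp_apply (f := φ (t - u)), ← hgroup, sub_add_cancel]
  have hsplit : (fun ζ => g (φ (r - u) ζ)) = (fun ζ => g (φ (r - t) ζ)) ∘ φ (t - u) := by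
    funext ζ
    rw [comp_apply, ← comp_apply (f := φ (r - t)), ← hgroup, sub_add_sub_cancel]
  rw [hsplit, fderiv_comp _ (hpt ▸ hg) hφ, hpt]

end Flow

theorem adjoint_equation_general
    (d k : ℕ)
    (f : (ℝ × (Fin d → ℝ) × (Fin k → ℝ)) → (Fin d → ℝ))
    (φ : ℝ → (ℝ × (Fin d → ℝ) × (Fin k → ℝ)) → (ℝ × (Fin d → ℝ) × (Fin k → ℝ)))
    (h : ℝ → (ℝ × (Fin d → ℝ) × (Fin k → ℝ)) → ℝ)
    -- φ is the lifted flow: group property, identity at 0, and φ'(τ) = F ∘ φ(τ)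
    (hφ0 : φ 0 = id)
    (hgroup : ∀ t τ : ℝ, φ (t + τ) = φ t ∘ φ τ)
    (hflow : ∀ (τ : ℝ) ξ, HasDerivAt (fun u => φ u ξ) (liftedF f (φ τ ξ)) τ)
    -- joint smoothness of the flow, and smoothness of the error functions
    (hφsmooth : ContDiff ℝ 2 (fun p : ℝ × (ℝ × (Fin d → ℝ) × (Fin k → ℝ)) => φ p.1 p.2))
    (hh : ∀ τ, ContDiff ℝ 2 (h τ)) :
    ∀ (τ t : ℝ), 0 < t → t < τ → τ ≤ 1 →
      ∀ ξ, HasDerivAt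
        (fun u => fderiv ℝ (fun ζ => h τ (φ (τ - u) ζ)) (φ u ξ))
        (-((fderiv ℝ (fun ζ => h τ (φ (τ - t) ζ)) (φ t ξ)).comp
            (fderiv ℝ (liftedF f) (φ t ξ))))
        t := by
  intro τ t _ _ _ ξ
  have hslice : ∀ s, ContDiff ℝ 2 (φ s) := fun s =>
    hφsmooth.comp (contDiff_const.prodMk contDiff_id)
  have hlambda : (fun u => fderiv ℝ (fun ζ => h τ (φ (τ - u) ζ)) (φ u ξ))
      = fun u => (fderiv ℝ (fun ζ => h τ (φ (τ - t) ζ)) (φ t ξ)).comp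
          (fderiv ℝ (φ (t - u)) (φ u ξ)) :=
    funext fun u => fderiv_comp_flow_sub hgroup
      (((hh τ).comp (hslice _)).differentiable two_ne_zero _)
      ((hslice _).differentiable two_ne_zero _)
  rw [hlambda, ← ContinuousLinearMap.comp_neg]
  have hderiv := (hasDerivAt_const t (fderiv ℝ (fun ζ => h τ (φ (τ - t) ζ)) (φ t ξ))).clm_comp
    (hasDerivAt_fderiv_flow_sub hφsmooth hφ0 hflow t ξ)
  rwa [ContinuousLinearMap.zero_comp, zero_add] at hderiv

/-- Adjoint equation: with `λ(τ,t) = (h(τ) ∘ φ(τ−t))' ∘ φ(t)`,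
the function `λ(τ,·)` satisfies `∂ₜ λ(τ,t) = −λ(τ,t) · (F' ∘ φ(t))` for `0 < t < τ ≤ 1`,
where the product is the composition of the linear map `λ(τ,t)(ξ) : S → ℝ` with the
linear map `F'(φ(t)(ξ)) : S → S`, at each point `ξ ∈ S`. -/
theorem adjoint_equation
    (d k : ℕ)
    (f : (ℝ × (Fin d → ℝ) × (Fin k → ℝ)) → (Fin d → ℝ))
    (φ : ℝ → (ℝ × (Fin d → ℝ) × (Fin k → ℝ)) → (ℝ × (Fin d → ℝ) × (Fin k → ℝ)))
    (h : ℝ → (ℝ × (Fin d → ℝ) × (Fin k → ℝ)) → ℝ)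
    -- f is C¹
    (hf : ContDiff ℝ 1 f)
    -- φ is the lifted flow: group property, identity at 0, and φ'(τ) = F ∘ φ(τ)
    (hφ0 : φ 0 = id)
    (hgroup : ∀ t τ : ℝ, φ (t + τ) = φ t ∘ φ τ)
    (hflow : ∀ (τ : ℝ) ξ, HasDerivAt (fun u => φ u ξ) (liftedF f (φ τ ξ)) τ)
    -- joint smoothness of the flow, and smoothness of the error functions
    (hφsmooth : ContDiff ℝ 2 (fun p : ℝ × (ℝ × (Fin d → ℝ) × (Fin k → ℝ)) => φ p.1 p.2))
    (hh : ∀ τ, ContDiff ℝ 2 (h τ)) :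
    ∀ (τ t : ℝ), 0 < t → t < τ → τ ≤ 1 →
      ∀ ξ, HasDerivAt
        (fun u => fderiv ℝ (fun ζ => h τ (φ (τ - u) ζ)) (φ u ξ))
        (-((fderiv ℝ (fun ζ => h τ (φ (τ - t) ζ)) (φ t ξ)).comp
            (fderiv ℝ (liftedF f) (φ t ξ))))
        t :=
  adjoint_equation_general d k f φ h hφ0 hgroup hflow hφsmooth hh
end

section
/- (Gradient via the adjoint equation, single time point.) Let the loss be L(t₀,x₀,θ) = h(τ)(t₀+τ, ϕ(t₀+τ,t₀,x₀,θ), θ) for a fixed τ ∈ (0,1]. If λ(τ,·) solves the adjoint equation ∂_t λ(τ,t) = −λ(τ,t)·(F'∘φ(t)) backward in time from the terminal condition λ(τ,τ) = h(τ)'∘φ(τ), then L' = λ(τ,0). -/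
open Set Function

theorem eq_of_continuousOn_Icc_of_hasDerivAt_Ioo_zero {E : Type*} [NormedAddCommGroup E]
    [NormedSpace ℝ E] {f : ℝ → E} {a b : ℝ} (hab : a < b) (hcont : ContinuousOn f (Icc a b))
    (hderiv : ∀ x ∈ Ioo a b, HasDerivAt f 0 x) : f b = f a := by
  have hright : HasDerivWithinAt f 0 (Ici a) a := by
    refine hasDerivWithinAt_Ici_of_tendsto_deriv
      (fun x hx => (hderiv x hx).differentiableAt.differentiableWithinAt)
      ((hcont a (left_mem_Icc.2 hab.le)).mono Ioo_subset_Icc_self) (Ioo_mem_nhdsGT hab)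
      (tendsto_const_nhds.congr' ?_)
    filter_upwards [Ioo_mem_nhdsGT hab] with x hx using (hderiv x hx).deriv.symm
  refine constant_of_has_deriv_right_zero hcont (fun x hx => ?_) b (right_mem_Icc.2 hab.le)
  rcases hx.1.eq_or_lt with rfl | hax
  · exact hright
  · exact (hderiv x ⟨hax, hx.2⟩).hasDerivWithinAt

theorem hasDerivAt_clm_comp_zero_of_adjoint {E F G : Type*} [NormedAddCommGroup E]
    [NormedSpace ℝ E] [NormedAddCommGroup F] [NormedSpace ℝ F] [NormedAddCommGroup G]
    [NormedSpace ℝ G] {lam : ℝ → F →L[ℝ] G} {J : ℝ → E →L[ℝ] F} {M : F →L[ℝ] F} {t : ℝ}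
    (hlam : HasDerivAt lam (-(lam t).comp M) t) (hJ : HasDerivAt J (M.comp (J t)) t) :
    HasDerivAt (fun u => (lam u).comp (J u)) 0 t := by
  convert hlam.clm_comp hJ using 1
  rw [ContinuousLinearMap.neg_comp, ContinuousLinearMap.comp_assoc, neg_add_cancel]

section Flow

variable {E : Type*} [NormedAddCommGroup E] [NormedSpace ℝ E] {φ : ℝ → E → E} {F : E → E}

theorem hasFDerivAt_of_differentiable_uncurry (hφ : Differentiable ℝ (uncurry φ)) (t : ℝ)
    (ζ : E) :
    HasFDerivAt (φ t) ((fderiv ℝ (uncurry φ) (t, ζ)).comp (ContinuousLinearMap.inr ℝ ℝ E)) ζ :=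
  (hφ (t, ζ)).hasFDerivAt.comp ζ (hasFDerivAt_prodMk_right t ζ)

theorem fderiv_uncurry_apply_one_zero (hφ : Differentiable ℝ (uncurry φ))
    (hflow : ∀ t ζ, HasDerivAt (fun u => φ u ζ) (F (φ t ζ)) t) (p : ℝ × E) :
    fderiv ℝ (uncurry φ) p (1, 0) = F (uncurry φ p) := by
  obtain ⟨t, ζ⟩ := p
  have hcurve :=
    (hφ (t, ζ)).hasFDerivAt.comp_hasDerivAt t ((hasDerivAt_id t).prodMk (hasDerivAt_const t ζ))
  exact hcurve.unique (hflow t ζ)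

theorem fderiv_fderiv_uncurry_apply_one_zero (hφ : ContDiff ℝ 2 (uncurry φ))
    (hF : Differentiable ℝ F) (hflow : ∀ t ζ, HasDerivAt (fun u => φ u ζ) (F (φ t ζ)) t)
    (p w : ℝ × E) :
    fderiv ℝ (fderiv ℝ (uncurry φ)) p w (1, 0) =
      fderiv ℝ F (uncurry φ p) (fderiv ℝ (uncurry φ) p w) := by
  have hφ' : Differentiable ℝ (fderiv ℝ (uncurry φ)) :=
    (hφ.fderiv_right (le_refl _)).differentiable one_ne_zero
  have htime : HasFDerivAt (fun q => fderiv ℝ (uncurry φ) q (1, 0))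
      ((ContinuousLinearMap.apply ℝ E ((1 : ℝ), (0 : E))).comp
        (fderiv ℝ (fderiv ℝ (uncurry φ)) p)) p :=
    (ContinuousLinearMap.apply ℝ E ((1 : ℝ), (0 : E))).hasFDerivAt.comp p (hφ' p).hasFDerivAt
  rw [funext (fderiv_uncurry_apply_one_zero (hφ.differentiable two_ne_zero) hflow)] at htime
  exact congr($(htime.unique
    ((hF _).hasFDerivAt.comp p (hφ.differentiable two_ne_zero p).hasFDerivAt)) w)

theorem hasDerivAt_fderiv_flow (hφ : ContDiff ℝ 2 (uncurry φ)) (hF : Differentiable ℝ F)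
    (hflow : ∀ t ζ, HasDerivAt (fun u => φ u ζ) (F (φ t ζ)) t) (t : ℝ) (ξ : E) :
    HasDerivAt (fun u => fderiv ℝ (φ u) ξ) ((fderiv ℝ F (φ t ξ)).comp (fderiv ℝ (φ t) ξ)) t := by
  have hdiff := hφ.differentiable two_ne_zero
  have hφ' : Differentiable ℝ (fderiv ℝ (uncurry φ)) :=
    (hφ.fderiv_right (le_refl _)).differentiable one_ne_zero
  have hslice : (fun u => fderiv ℝ (φ u) ξ) =
      fun u => (fderiv ℝ (uncurry φ) (u, ξ)).comp (ContinuousLinearMap.inr ℝ ℝ E) :=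
    funext fun u => (hasFDerivAt_of_differentiable_uncurry hdiff u ξ).fderiv
  have hD : HasDerivAt (fun u => fderiv ℝ (uncurry φ) (u, ξ))
      (fderiv ℝ (fderiv ℝ (uncurry φ)) (t, ξ) (1, 0)) t :=
    (hφ' (t, ξ)).hasFDerivAt.comp_hasDerivAt t ((hasDerivAt_id t).prodMk (hasDerivAt_const t ξ))
  have hDinr := hD.clm_comp (hasDerivAt_const t (ContinuousLinearMap.inr ℝ ℝ E))
  rw [hslice, (hasFDerivAt_of_differentiable_uncurry hdiff t ξ).fderiv]
  convert hDinr using 1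
  ext v
  have hsymm := (hφ.contDiffAt (x := (t, ξ))).isSymmSndFDerivAt (by simp) (1, 0) (0, v)
  simp [hsymm, fderiv_fderiv_uncurry_apply_one_zero hφ hF hflow]

end Flow

theorem fderiv_comp_flow_eq_adjoint_at_zero {E : Type*} [NormedAddCommGroup E] [NormedSpace ℝ E]
    {φ : ℝ → E → E} {F : E → E} {h : E → ℝ} {lam : ℝ → E → E →L[ℝ] ℝ} {τ : ℝ} (hτ : 0 < τ)
    (hF : Differentiable ℝ F) (hh : Differentiable ℝ h) (hφ0 : φ 0 = id)
    (hflow : ∀ t ζ, HasDerivAt (fun u => φ u ζ) (F (φ t ζ)) t)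
    (hφ : ContDiff ℝ 2 (uncurry φ))
    (hadj : ∀ t ∈ Ioo 0 τ, ∀ ξ,
      HasDerivAt (fun u => lam u ξ) (-((lam t ξ).comp (fderiv ℝ F (φ t ξ)))) t)
    (hcont : ∀ ξ, ContinuousOn (fun t => lam t ξ) (Icc 0 τ))
    (hterm : ∀ ξ, lam τ ξ = fderiv ℝ h (φ τ ξ)) (ξ : E) :
    fderiv ℝ (fun ζ => h (φ τ ζ)) ξ = lam 0 ξ := by
  have hvar := fun t => hasDerivAt_fderiv_flow hφ hF hflow t ξ
  have hpairing : (lam τ ξ).comp (fderiv ℝ (φ τ) ξ) = (lam 0 ξ).comp (fderiv ℝ (φ 0) ξ) :=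
    eq_of_continuousOn_Icc_of_hasDerivAt_Ioo_zero hτ
      ((hcont ξ).clm_comp
        (continuous_iff_continuousAt.2 fun t => (hvar t).continuousAt).continuousOn)
      fun t ht => hasDerivAt_clm_comp_zero_of_adjoint (hadj t ht ξ) (hvar t)
  have hφτ := hasFDerivAt_of_differentiable_uncurry (hφ.differentiable two_ne_zero) τ ξ
  rw [fderiv_fun_comp ξ (hh _) hφτ.differentiableAt, ← hterm, hpairing, hφ0, fderiv_id,
    ContinuousLinearMap.comp_id]

theorem gradient_single_time_point_general
    (d k : ℕ) (τ : ℝ) (hτ : τ ∈ Set.Ioc (0:ℝ) 1)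
    (f : (ℝ × (Fin d → ℝ) × (Fin k → ℝ)) → (Fin d → ℝ))
    (φ : ℝ → (ℝ × (Fin d → ℝ) × (Fin k → ℝ)) → (ℝ × (Fin d → ℝ) × (Fin k → ℝ)))
    (h : ℝ → (ℝ × (Fin d → ℝ) × (Fin k → ℝ)) → ℝ)
    -- regularity assumptions
    (hf : ContDiff ℝ 1 f)
    (hh : ∀ t, ContDiff ℝ 1 (h t))
    -- φ is the lifted flow
    (hφ0 : φ 0 = id)
    (hflow : ∀ (t : ℝ) ξ, HasDerivAt (fun u => φ u ξ) (liftedF f (φ t ξ)) t)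
    (hφsmooth : ContDiff ℝ 2 (fun p : ℝ × (ℝ × (Fin d → ℝ) × (Fin k → ℝ)) => φ p.1 p.2))
    -- λ(τ,·), written `lam`, solves the adjoint equation backward on (0,τ) ...
    (lam : ℝ → (ℝ × (Fin d → ℝ) × (Fin k → ℝ)) →
      ((ℝ × (Fin d → ℝ) × (Fin k → ℝ)) →L[ℝ] ℝ))
    (hadj : ∀ t ∈ Set.Ioo (0:ℝ) τ, ∀ ξ,
      HasDerivAt (fun u => lam u ξ)
        (-((lam t ξ).comp (fderiv ℝ (liftedF f) (φ t ξ)))) t)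
    (hcont : ∀ ξ, ContinuousOn (fun t => lam t ξ) (Set.Icc 0 τ))
    -- ... starting from the terminal condition λ(τ,τ) = h(τ)' ∘ φ(τ)
    (hterm : ∀ ξ, lam τ ξ = fderiv ℝ (h τ) (φ τ ξ)) :
    -- then L' = λ(τ,0) for the loss L = h(τ) ∘ φ(τ)
    ∀ ξ, fderiv ℝ (fun ζ => h τ (φ τ ζ)) ξ = lam 0 ξ := by
  have hF : Differentiable ℝ (liftedF f) :=
    (differentiable_const _).prodMk ((hf.differentiable one_ne_zero).prodMk
      (differentiable_const _))
  exact fderiv_comp_flow_eq_adjoint_at_zero hτ.1 hF ((hh τ).differentiable one_ne_zero) hφ0 hflow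
    hφsmooth hadj hcont hterm

/-- Gradient via the adjoint equation, single time point:
if `λ(τ,·)` solves the adjoint equation backward in time from the terminal condition
`λ(τ,τ) = h(τ)' ∘ φ(τ)`, then the derivative of the loss `L = h(τ) ∘ φ(τ)`
satisfies `L' = λ(τ,0)`. -/
theorem gradient_single_time_point
    (d k : ℕ) (τ : ℝ) (hτ : τ ∈ Set.Ioc (0:ℝ) 1)
    (f : (ℝ × (Fin d → ℝ) × (Fin k → ℝ)) → (Fin d → ℝ))
    (φ : ℝ → (ℝ × (Fin d → ℝ) × (Fin k → ℝ)) → (ℝ × (Fin d → ℝ) × (Fin k → ℝ)))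
    (h : ℝ → (ℝ × (Fin d → ℝ) × (Fin k → ℝ)) → ℝ)
    -- regularity assumptions
    (hf : ContDiff ℝ 1 f)
    (hh : ∀ t, ContDiff ℝ 1 (h t))
    -- φ is the lifted flow
    (hφ0 : φ 0 = id)
    (hgroup : ∀ t s : ℝ, φ (t + s) = φ t ∘ φ s)
    (hflow : ∀ (t : ℝ) ξ, HasDerivAt (fun u => φ u ξ) (liftedF f (φ t ξ)) t)
    (hφsmooth : ContDiff ℝ 2 (fun p : ℝ × (ℝ × (Fin d → ℝ) × (Fin k → ℝ)) => φ p.1 p.2))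
    -- λ(τ,·), written `lam`, solves the adjoint equation backward on (0,τ) ...
    (lam : ℝ → (ℝ × (Fin d → ℝ) × (Fin k → ℝ)) →
      ((ℝ × (Fin d → ℝ) × (Fin k → ℝ)) →L[ℝ] ℝ))
    (hadj : ∀ t ∈ Set.Ioo (0:ℝ) τ, ∀ ξ,
      HasDerivAt (fun u => lam u ξ)
        (-((lam t ξ).comp (fderiv ℝ (liftedF f) (φ t ξ)))) t)
    (hcont : ∀ ξ, ContinuousOn (fun t => lam t ξ) (Set.Icc 0 τ))
    -- ... starting from the terminal condition λ(τ,τ) = h(τ)' ∘ φ(τ)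
    (hterm : ∀ ξ, lam τ ξ = fderiv ℝ (h τ) (φ τ ξ)) :
    -- then L' = λ(τ,0) for the loss L = h(τ) ∘ φ(τ)
    ∀ ξ, fderiv ℝ (fun ζ => h τ (φ τ ζ)) ξ = lam 0 ξ :=
  gradient_single_time_point_general d k τ hτ f φ h hf hh hφ0 hflow hφsmooth lam hadj hcont hterm
end

section
/- (Single observation strictly inside the interval.) Suppose σ = δ_{τ} for some fixed 0 < τ < 1 and the loss is L = h(τ)∘φ(τ). Let g(τ) = (h(τ)'∘φ(τ))(t₀,x₀,θ). Then L'(t₀,x₀,θ) = a(0), where a solves the backward homogeneous linear problem ȧ(t) = −a₂(t)·J(t) for 0 < t < τ with terminal condition a(τ) = g(τ), and J(t) = f'(t₀+t, x(t₀+t), θ). Equivalently: the solution of the adjoint equation on (τ,1] with a(1)=0 is identically zero, jumps by g(τ) at t = τ, then evolves by the homogeneous equation on (0,τ). -/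
/-!
Let `D t = Dφ_t(ξ₀)`. Writing the flow in integral form and differentiating under the integral
sign gives the variational equation `Ḋ = J D`, with `J t = F'(φ_t ξ₀)`. If `p` solves the adjoint
equation `ṗ = -p J`, then `(p D)˙ = -p J D + p J D = 0`, so `p(t) ∘ D(t)` is conserved. For `a`
this gives `L'(ξ₀) = g(τ) D(τ) = a(τ) D(τ) = a(0) D(0) = a(0)`. For `b` it gives
`b(t) D(t) = b(1) D(1) = 0`, and `D(t)` has the right inverse `Dφ_{-t}(φ_t ξ₀)` by the group
property, so `b(t) = 0`.
-/

open Set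

/-- Inclusion of the middle (state) block `ℝ^d` into `S = ℝ × ℝ^d × ℝ^k`. -/
noncomputable def midIncl (d k : ℕ) :
    (Fin d → ℝ) →L[ℝ] (ℝ × (Fin d → ℝ) × (Fin k → ℝ)) :=
  (ContinuousLinearMap.inr ℝ ℝ ((Fin d → ℝ) × (Fin k → ℝ))).comp
    (ContinuousLinearMap.inl ℝ (Fin d → ℝ) (Fin k → ℝ))

open Topology

theorem hasFDerivAt_intervalIntegral_of_continuous {H E : Type*} [NormedAddCommGroup H]
    [NormedSpace ℝ H] [NormedAddCommGroup E] [NormedSpace ℝ E]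
    {G : H → ℝ → E} {G' : H → ℝ → H →L[ℝ] E}
    (hG : Continuous (Function.uncurry G)) (hG' : Continuous (Function.uncurry G'))
    (hdiff : ∀ x u, HasFDerivAt (fun y => G y u) (G' x u) x) (a b : ℝ) (x₀ : H) :
    HasFDerivAt (fun x => ∫ u in a..b, G x u) (∫ u in a..b, G' x₀ u) x₀ := by
  have hG'x₀ : Continuous (G' x₀) := hG'.comp (Continuous.prodMk_right x₀)
  obtain ⟨C, hC⟩ := isCompact_uIcc.exists_bound_of_continuousOn hG'x₀.continuousOn
  have hbound : ∀ᶠ x in 𝓝 x₀, ∀ u ∈ uIcc a b, ‖G' x u‖ < C + 1 :=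
    isCompact_uIcc.eventually_forall_of_forall_eventually fun u hu =>
      (hG'.norm.tendsto (x₀, u)).eventually_lt_const ((hC u hu).trans_lt (lt_add_one C))
  refine intervalIntegral.hasFDerivAt_integral_of_dominated_of_fderiv_le (bound := fun _ => C + 1)
    hbound (.of_forall fun x => (hG.comp (Continuous.prodMk_right x)).aestronglyMeasurable)
    ((hG.comp (Continuous.prodMk_right x₀)).intervalIntegrable a b)
    hG'x₀.aestronglyMeasurable
    (.of_forall fun u hu x hx => (hx u (uIoc_subset_uIcc hu)).le) intervalIntegrable_const
    (.of_forall fun u _ x _ => hdiff x u)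

theorem constant_of_hasDerivAt_zero_Ioo {E : Type*} [NormedAddCommGroup E] [NormedSpace ℝ E]
    {f : ℝ → E} {a b : ℝ} (hab : a ≤ b) (hf : ContinuousOn f (Icc a b))
    (hf' : ∀ t ∈ Ioo a b, HasDerivAt f 0 t) : f b = f a := by
  rcases hab.eq_or_lt with rfl | hab
  · rfl
  have hmid : (a + b) / 2 ∈ Ioo a b := ⟨by linarith, by linarith⟩
  have heq : EqOn f (fun _ => f ((a + b) / 2)) (Icc a b) :=
    ODE_solution_unique_of_mem_Icc (v := fun _ _ => 0) (s := fun _ => univ) (K := 0)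
      (fun _ _ => (LipschitzWith.const (0 : E)).lipschitzOnWith) hmid hf hf' (fun _ _ => trivial)
      continuousOn_const (fun _ _ => hasDerivAt_const _ _) (fun _ _ => trivial) rfl
  rw [heq (right_mem_Icc.2 hab.le), heq (left_mem_Icc.2 hab.le)]

theorem differentiable_slice {X E G : Type*} [NormedAddCommGroup X] [NormedSpace ℝ X]
    [NormedAddCommGroup E] [NormedSpace ℝ E] [NormedAddCommGroup G] [NormedSpace ℝ G]
    {Φ : X → E → G} (hΦ : Differentiable ℝ (fun p : X × E => Φ p.1 p.2)) (t : X) :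
    Differentiable ℝ (Φ t) :=
  hΦ.comp ((differentiable_const t).prodMk differentiable_id)

theorem continuous_fderiv_slice {X E G : Type*} [NormedAddCommGroup X] [NormedSpace ℝ X]
    [NormedAddCommGroup E] [NormedSpace ℝ E] [NormedAddCommGroup G] [NormedSpace ℝ G]
    {Φ : X → E → G} (hΦ : ContDiff ℝ 1 (fun p : X × E => Φ p.1 p.2)) :
    Continuous (fun p : X × E => fderiv ℝ (Φ p.1) p.2) := by
  have hslice (t : X) (x : E) : fderiv ℝ (Φ t) x =
      (fderiv ℝ (fun p : X × E => Φ p.1 p.2) (t, x)).comp (ContinuousLinearMap.inr ℝ X E) :=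
    (((hΦ.differentiable one_ne_zero) (t, x)).hasFDerivAt.comp x
      (hasFDerivAt_prodMk_right t x)).fderiv
  simp_rw [hslice]
  exact (hΦ.continuous_fderiv one_ne_zero).clm_comp continuous_const

section Flow

variable {E : Type*} [NormedAddCommGroup E] [NormedSpace ℝ E] {F : E → E} {Φ : ℝ → E → E}

theorem fderiv_flow_comp_fderiv_flow_neg (hΦ0 : Φ 0 = id)
    (hgroup : ∀ t s : ℝ, Φ (t + s) = Φ t ∘ Φ s) (hdiff : ∀ t, Differentiable ℝ (Φ t))
    (t : ℝ) (x : E) :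
    (fderiv ℝ (Φ t) x).comp (fderiv ℝ (Φ (-t)) (Φ t x)) = ContinuousLinearMap.id ℝ E := by
  have hinv : Φ t ∘ Φ (-t) = id := by rw [← hgroup, add_neg_cancel, hΦ0]
  have hx : Φ (-t) (Φ t x) = x := by
    rw [← Function.comp_apply (f := Φ (-t)), ← hgroup, neg_add_cancel, hΦ0, id]
  have hchain := fderiv_comp (Φ t x) (hdiff t (Φ (-t) (Φ t x))) (hdiff (-t) (Φ t x))
  rwa [hinv, fderiv_id, hx, eq_comm] at hchain

variable [CompleteSpace E]

theorem flow_eq_add_integral (hF : Continuous F) (hΦ0 : Φ 0 = id)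
    (hflow : ∀ t x, HasDerivAt (fun u => Φ u x) (F (Φ t x)) t) (t : ℝ) (x : E) :
    Φ t x = x + ∫ u in 0..t, F (Φ u x) := by
  have hcont : Continuous fun u => F (Φ u x) :=
    hF.comp (continuous_iff_continuousAt.2 fun u => (hflow u x).continuousAt)
  rw [intervalIntegral.integral_eq_sub_of_hasDerivAt (fun u _ => hflow u x)
    (hcont.intervalIntegrable 0 t), hΦ0, id, add_sub_cancel]

variable (hF : ContDiff ℝ 1 F) (hΦ0 : Φ 0 = id)
  (hflow : ∀ t x, HasDerivAt (fun u => Φ u x) (F (Φ t x)) t)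
  (hΦ : ContDiff ℝ 1 (fun p : ℝ × E => Φ p.1 p.2))
include hF hΦ0 hflow hΦ

theorem fderiv_flow_eq_id_add_integral (t : ℝ) (x : E) :
    fderiv ℝ (Φ t) x =
      ContinuousLinearMap.id ℝ E + ∫ u in 0..t, (fderiv ℝ F (Φ u x)).comp (fderiv ℝ (Φ u) x) := by
  have hΦt : Φ t = fun y => y + ∫ u in 0..t, F (Φ u y) :=
    funext (flow_eq_add_integral hF.continuous hΦ0 hflow t)
  have hdiff (y : E) (u : ℝ) : HasFDerivAt (fun z => F (Φ u z))
      ((fderiv ℝ F (Φ u y)).comp (fderiv ℝ (Φ u) y)) y :=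
    (hF.differentiable one_ne_zero _).hasFDerivAt.comp y
      (differentiable_slice (hΦ.differentiable one_ne_zero) u y).hasFDerivAt
  refine hΦt ▸ ((hasFDerivAt_id x).add
    (hasFDerivAt_intervalIntegral_of_continuous ?_ ?_ hdiff 0 t x)).fderiv
  · exact hF.continuous.comp (hΦ.continuous.comp continuous_swap)
  · exact ((hF.continuous_fderiv one_ne_zero).comp (hΦ.continuous.comp continuous_swap)).clm_comp
      ((continuous_fderiv_slice hΦ).comp continuous_swap)

theorem hasDerivAt_fderiv_flow_s17 (x : E) (t : ℝ) :
    HasDerivAt (fun t => fderiv ℝ (Φ t) x) ((fderiv ℝ F (Φ t x)).comp (fderiv ℝ (Φ t) x)) t := by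
  have hcont : Continuous fun u => (fderiv ℝ F (Φ u x)).comp (fderiv ℝ (Φ u) x) :=
    ((hF.continuous_fderiv one_ne_zero).comp (hΦ.continuous.comp (.prodMk_left x))).clm_comp
      ((continuous_fderiv_slice hΦ).comp (.prodMk_left x))
  rw [funext (fderiv_flow_eq_id_add_integral hF hΦ0 hflow hΦ · x)]
  exact (hcont.integral_hasStrictDerivAt 0 t).hasDerivAt.const_add _

end Flow

theorem comp_eq_of_hasDerivAt_adjoint {E E' G : Type*} [NormedAddCommGroup E] [NormedSpace ℝ E]
    [NormedAddCommGroup E'] [NormedSpace ℝ E'] [NormedAddCommGroup G] [NormedSpace ℝ G]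
    {M : ℝ → E →L[ℝ] E} {p : ℝ → E →L[ℝ] G} {D : ℝ → E' →L[ℝ] E} {a b : ℝ} (hab : a ≤ b)
    (hp : ∀ t ∈ Ioo a b, HasDerivAt p (-(p t).comp (M t)) t) (hp_cont : ContinuousOn p (Icc a b))
    (hD : ∀ t ∈ Ioo a b, HasDerivAt D ((M t).comp (D t)) t) (hD_cont : ContinuousOn D (Icc a b)) :
    (p b).comp (D b) = (p a).comp (D a) := by
  refine constant_of_hasDerivAt_zero_Ioo (f := fun t => (p t).comp (D t)) hab
    (hp_cont.clm_comp hD_cont) fun t ht => ?_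
  refine ((hp t ht).clm_comp (hD t ht)).congr_deriv ?_
  rw [ContinuousLinearMap.neg_comp, ContinuousLinearMap.comp_assoc, neg_add_cancel]

theorem hasFDerivAt_liftedF {d k : ℕ} {f : (ℝ × (Fin d → ℝ) × (Fin k → ℝ)) → (Fin d → ℝ)}
    {ζ : ℝ × (Fin d → ℝ) × (Fin k → ℝ)} (hf : DifferentiableAt ℝ f ζ) :
    HasFDerivAt (liftedF f) ((midIncl d k).comp (fderiv ℝ f ζ)) ζ := by
  have hprod : HasFDerivAt (fun ξ => ((1 : ℝ), f ξ, (0 : Fin k → ℝ)))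
      ((0 : (ℝ × (Fin d → ℝ) × (Fin k → ℝ)) →L[ℝ] ℝ).prod ((fderiv ℝ f ζ).prod 0)) ζ :=
    (hasFDerivAt_const _ _).prodMk (hf.hasFDerivAt.prodMk (hasFDerivAt_const _ _))
  refine (hprod : HasFDerivAt (liftedF f) _ ζ).congr_fderiv ?_
  ext <;> simp [midIncl]

theorem contDiff_liftedF {d k : ℕ} {f : (ℝ × (Fin d → ℝ) × (Fin k → ℝ)) → (Fin d → ℝ)}
    (hf : ContDiff ℝ 1 f) : ContDiff ℝ 1 (liftedF f) :=
  contDiff_const.prodMk (hf.prodMk contDiff_const)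

/-- Single observation strictly inside the interval: for `σ = δ_τ`,
`0 < τ < 1`, and loss `L = h(τ)∘φ(τ)`, one has `L'(ξ₀) = a(0)`, where `a` solves
the backward homogeneous problem `ȧ(t) = −a₂(t)·J(t)` on `(0,τ)` with terminal
condition `a(τ) = g(τ) = (h(τ)'∘φ(τ))(ξ₀)`.  Moreover the solution of the adjoint
equation on `(τ,1]` with `a(1) = 0` is identically zero. -/
theorem gradient_single_observation_interior
    (d k : ℕ) (τ : ℝ) (hτ : τ ∈ Set.Ioo (0:ℝ) 1)
    (f : (ℝ × (Fin d → ℝ) × (Fin k → ℝ)) → (Fin d → ℝ)) (hf : ContDiff ℝ 1 f)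
    (φ : ℝ → (ℝ × (Fin d → ℝ) × (Fin k → ℝ)) → (ℝ × (Fin d → ℝ) × (Fin k → ℝ)))
    (h : ℝ → (ℝ × (Fin d → ℝ) × (Fin k → ℝ)) → ℝ)
    -- φ is the lifted flow of f
    (hφ0 : φ 0 = id)
    (hgroup : ∀ t s : ℝ, φ (t + s) = φ t ∘ φ s)
    (hflow : ∀ (t : ℝ) ξ, HasDerivAt (fun u => φ u ξ) (liftedF f (φ t ξ)) t)
    (hφsmooth : ContDiff ℝ 1 (fun p : ℝ × (ℝ × (Fin d → ℝ) × (Fin k → ℝ)) => φ p.1 p.2))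
    (hh : ∀ t, ContDiff ℝ 1 (h t))
    -- the base point and the adjoint variable
    (ξ₀ : ℝ × (Fin d → ℝ) × (Fin k → ℝ))
    (a : ℝ → ((ℝ × (Fin d → ℝ) × (Fin k → ℝ)) →L[ℝ] ℝ))
    -- a solves the homogeneous equation ȧ(t) = −a₂(t)·J(t) on (0,τ) ...
    (hode : ∀ t ∈ Set.Ioo (0:ℝ) τ,
      HasDerivAt a (-(((a t).comp (midIncl d k)).comp (fderiv ℝ f (φ t ξ₀)))) t)
    (hcont : ContinuousOn a (Set.Icc 0 τ))
    -- ... with terminal condition a(τ) = g(τ)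
    (hterm : a τ = fderiv ℝ (h τ) (φ τ ξ₀)) :
    -- then L' = a(0), where L = h(τ)∘φ(τ)
    fderiv ℝ (fun ζ => h τ (φ τ ζ)) ξ₀ = a 0 ∧
    -- and any solution of the homogeneous adjoint equation on (τ,1) vanishing at 1
    -- is identically zero on [τ,1]
    (∀ b : ℝ → ((ℝ × (Fin d → ℝ) × (Fin k → ℝ)) →L[ℝ] ℝ),
      (∀ t ∈ Set.Ioo τ (1:ℝ),
        HasDerivAt b (-(((b t).comp (midIncl d k)).comp (fderiv ℝ f (φ t ξ₀)))) t) →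
      ContinuousOn b (Set.Icc τ 1) → b 1 = 0 →
      ∀ t ∈ Set.Icc τ (1:ℝ), b t = 0) := by
  set D := fun t => fderiv ℝ (φ t) ξ₀
  have hdiff := differentiable_slice (hφsmooth.differentiable one_ne_zero)
  have hD (t : ℝ) : HasDerivAt D (((midIncl d k).comp (fderiv ℝ f (φ t ξ₀))).comp (D t)) t := by
    have := hasDerivAt_fderiv_flow_s17 (contDiff_liftedF hf) hφ0 hflow hφsmooth ξ₀ t
    rwa [(hasFDerivAt_liftedF (hf.differentiable one_ne_zero _)).fderiv] at this
  have hconserved (p : ℝ → _ →L[ℝ] ℝ) (s r : ℝ) (hsr : s ≤ r)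
      (hp : ∀ t ∈ Ioo s r,
        HasDerivAt p (-(p t).comp ((midIncl d k).comp (fderiv ℝ f (φ t ξ₀)))) t)
      (hp_cont : ContinuousOn p (Icc s r)) : (p r).comp (D r) = (p s).comp (D s) :=
    comp_eq_of_hasDerivAt_adjoint hsr hp hp_cont (fun t _ => hD t)
      (HasDerivAt.continuousOn fun t _ => hD t)
  refine ⟨?_, fun b hb hb_cont hb1 t ht => ?_⟩
  · calc fderiv ℝ (fun ζ => h τ (φ τ ζ)) ξ₀ = (a τ).comp (D τ) :=
          hterm ▸ fderiv_comp ξ₀ ((hh τ).differentiable one_ne_zero _) (hdiff τ ξ₀)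
      _ = (a 0).comp (D 0) := hconserved a 0 τ hτ.1.le hode hcont
      _ = a 0 := by simp [D, hφ0]
  · have hbD : (b t).comp (D t) = 0 := by
      rw [← hconserved b t 1 ht.2 (fun s hs => hb s ⟨ht.1.trans_lt hs.1, hs.2⟩)
        (hb_cont.mono (Icc_subset_Icc_left ht.1)), hb1, ContinuousLinearMap.zero_comp]
    rw [← (b t).comp_id, ← fderiv_flow_comp_fderiv_flow_neg hφ0 hgroup hdiff t ξ₀,
      ← ContinuousLinearMap.comp_assoc, hbD, ContinuousLinearMap.zero_comp]
end
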